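/- arXiv:math/9809102 — 4 statements merged into one kernel-verified Lean document; each statement's English description precedes it below -/
import Mathlib

section
/- Let T, S be partial isometries on a complex Hilbert space with S = S T* S. Then T S* is an orthogonal projection and T S* = S S*. -/
open ContinuousLinearMap

/-!
Put `x = t s*` and `q = s s*`. From `s* = s* t s*` one gets `q x = q`, hence `x* q = q`, and
since `t* t ≤ 1` also `x* x = s (t* t) s* ≤ q`. Expanding then gives
`(x - q)* (x - q) = x* x - q ≤ 0`, so this positive element vanishes and `x = q` by the C⋆-identity.
-/

def IsPartialIsometry {R : Type*} [Mul R] [Star R] (t : R) : Prop :=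
  t * star t * t = t

namespace IsPartialIsometry

section Semigroup

variable {R : Type*} [Semigroup R] [StarMul R] {t : R}

theorem mul_star_mul_self (ht : IsPartialIsometry t) : t * star t * t = t := ht

theorem isStarProjection_star_mul_self (ht : IsPartialIsometry t) :
    IsStarProjection (star t * t) where
  isIdempotentElem := by
    rw [IsIdempotentElem, mul_assoc, ← mul_assoc t, ht.mul_star_mul_self]
  isSelfAdjoint := .star_mul_self t

theorem isStarProjection_mul_star_self (ht : IsPartialIsometry t) :
    IsStarProjection (t * star t) where
  isIdempotentElem := by
    rw [IsIdempotentElem, ← mul_assoc, ht.mul_star_mul_self]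
  isSelfAdjoint := .mul_star_self t

end Semigroup

variable {A : Type*} [NormedRing A] [StarRing A] [CStarRing A] [PartialOrder A]
  [StarOrderedRing A]

theorem mul_star_eq_mul_star_self {t s : A} (ht : IsPartialIsometry t)
    (hs : IsPartialIsometry s) (hst : s = s * star t * s) :
    t * star s = s * star s := by
  set x := t * star s
  set q := s * star s
  have hq : IsStarProjection q := hs.isStarProjection_mul_star_self
  have hqx : q * x = q := by
    have hst' : star s * t * star s = star s := by
      simpa only [star_mul, star_star, mul_assoc] using (congrArg star hst).symm
    simp only [q, x, mul_assoc] at hst' ⊢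
    rw [hst']
  have hxq : star x * q = q := by
    simpa only [star_mul, hq.isSelfAdjoint.star_eq] using congrArg star hqx
  have hxx : star x * x ≤ q := by
    calc star x * x = s * (star t * t) * star s := by
          simp only [x, star_mul, star_star, mul_assoc]
      _ ≤ s * 1 * star s :=
        star_right_conjugate_le_conjugate ht.isStarProjection_star_mul_self.le_one s
      _ = q := by rw [mul_one]
  have hsq : star (x - q) * (x - q) = star x * x - q := by
    rw [star_sub, sub_mul, mul_sub, mul_sub, hxq, hq.isSelfAdjoint.star_eq, hqx,
      hq.isIdempotentElem.eq]
    abel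
  have hzero : star (x - q) * (x - q) = 0 :=
    le_antisymm (hsq ▸ sub_nonpos.mpr hxx) (star_mul_self_nonneg _)
  exact sub_eq_zero.mp (CStarRing.star_mul_self_eq_zero_iff _ |>.mp hzero)

end IsPartialIsometry

theorem stmt_4 {H : Type*} [NormedAddCommGroup H] [InnerProductSpace ℂ H]
    [CompleteSpace H] (T S : H →L[ℂ] H)
    (hT : T * adjoint T * T = T) (hS : S * adjoint S * S = S)
    (hTS : S = S * adjoint T * S) :
    adjoint (T * adjoint S) = T * adjoint S ∧
      (T * adjoint S) * (T * adjoint S) = T * adjoint S ∧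
      T * adjoint S = S * adjoint S := by
  simp only [← star_eq_adjoint] at hT hS hTS ⊢
  have hTS' : T * star S = S * star S :=
    IsPartialIsometry.mul_star_eq_mul_star_self hT hS hTS
  have hP := (show IsPartialIsometry S from hS).isStarProjection_mul_star_self
  rw [hTS']
  exact ⟨hP.isSelfAdjoint.star_eq, hP.isIdempotentElem.eq, rfl⟩
end

section
/- Let T, S be partial isometries on a complex Hilbert space such that T + λS is a partial isometry for λ = 1, -1, i, -i. Then S T* S = 0, T T* S + S T* T = 0, T S* T = 0, and S S* T + T S* S = 0. -/
set_option maxHeartbeats 1000000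


open ContinuousLinearMap Complex

theorem stmt_7 {H : Type*} [NormedAddCommGroup H] [InnerProductSpace ℂ H]
    [CompleteSpace H] (T S : H →L[ℂ] H)
    (hT : T * adjoint T * T = T) (hS : S * adjoint S * S = S)
    (h : ∀ lam : ℂ, lam = 1 ∨ lam = -1 ∨ lam = I ∨ lam = -I →
        (T + lam • S) * adjoint (T + lam • S) * (T + lam • S) = T + lam • S) :
    S * adjoint T * S = 0 ∧ T * adjoint T * S + S * adjoint T * T = 0 ∧
      T * adjoint S * T = 0 ∧ S * adjoint S * T + T * adjoint S * S = 0 := by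
  rw [mul_assoc] at hT hS
  have key : ∀ lam : ℂ, lam = 1 ∨ lam = -1 ∨ lam = I ∨ lam = -I →
      lam • (T * (adjoint T * S) + S * (adjoint T * T)) +
        (starRingEnd ℂ lam) • (T * (adjoint S * T)) +
        (lam * lam) • (S * (adjoint T * S)) +
        (lam * starRingEnd ℂ lam) • (T * (adjoint S * S) + S * (adjoint S * T)) +
        (lam * lam * starRingEnd ℂ lam) • (S * (adjoint S * S)) = lam • S := by
    intro lam hmem
    have e := h lam hmem
    rw [map_add, map_smulₛₗ] at e
    simp only [mul_add, add_mul, smul_mul_assoc, mul_smul_comm, smul_smul, mul_assoc] at e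
    linear_combination (norm := module) e - hT
  have e1 : (1:ℂ) • (T * (adjoint T * S) + S * (adjoint T * T)) +
      (1:ℂ) • (T * (adjoint S * T)) + (1:ℂ) • (S * (adjoint T * S)) +
      (T * (adjoint S * S) + S * (adjoint S * T)) = 0 := by
    have k := key 1 (Or.inl rfl)
    simp only [map_one, mul_one, one_mul] at k
    linear_combination (norm := module) k - hS
  have e2 : (-1:ℂ) • (T * (adjoint T * S) + S * (adjoint T * T)) +
      (-1:ℂ) • (T * (adjoint S * T)) + (1:ℂ) • (S * (adjoint T * S)) +
      (T * (adjoint S * S) + S * (adjoint S * T)) = 0 := by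
    have k := key (-1) (Or.inr (Or.inl rfl))
    simp only [map_neg, map_one, neg_mul, one_mul, mul_neg, mul_one, neg_neg] at k
    linear_combination (norm := module) k - (-1 : ℂ) • hS
  have e3 : (I:ℂ) • (T * (adjoint T * S) + S * (adjoint T * T)) +
      (-I:ℂ) • (T * (adjoint S * T)) + (-1:ℂ) • (S * (adjoint T * S)) +
      (T * (adjoint S * S) + S * (adjoint S * T)) = 0 := by
    have k := key I (Or.inr (Or.inr (Or.inl rfl)))
    simp only [Complex.conj_I, Complex.I_mul_I, mul_neg, neg_mul, neg_neg, mul_one,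
      one_mul] at k
    linear_combination (norm := module) k - (I : ℂ) • hS
  have e4 : (-I:ℂ) • (T * (adjoint T * S) + S * (adjoint T * T)) +
      (I:ℂ) • (T * (adjoint S * T)) + (-1:ℂ) • (S * (adjoint T * S)) +
      (T * (adjoint S * S) + S * (adjoint S * T)) = 0 := by
    have k := key (-I) (Or.inr (Or.inr (Or.inr rfl)))
    simp only [map_neg, Complex.conj_I, neg_neg, neg_mul, mul_neg, Complex.I_mul_I,
      mul_one, one_mul] at k
    linear_combination (norm := module) k - (-I : ℂ) • hS
  set a := T * (adjoint T * S) with ha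
  set b := S * (adjoint T * T) with hb
  set c := T * (adjoint S * T) with hc
  set d := S * (adjoint T * S) with hd
  set p := T * (adjoint S * S) with hp
  set q := S * (adjoint S * T) with hq
  -- f1 : A + B = 0
  have f1 : (a + b) + c = 0 := by
    linear_combination (norm := module) (1/2:ℂ) • e1 - (1/2:ℂ) • e2
  -- f2 : C + D = 0
  have f2 : d + (p + q) = 0 := by
    linear_combination (norm := module) (1/2:ℂ) • e1 + (1/2:ℂ) • e2
  -- f3 : -C + D = 0
  have f3 : (-1:ℂ) • (d) + (p + q) = 0 := by
    linear_combination (norm := module) (1/2:ℂ) • e3 + (1/2:ℂ) • e4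
  have hC : d = 0 := by
    linear_combination (norm := module) (1/2:ℂ) • f2 - (1/2:ℂ) • f3
  have hD : p + q = 0 := by
    linear_combination (norm := module) (1/2:ℂ) • f2 + (1/2:ℂ) • f3
  have f4 : I • ((a + b) - c) = 0 := by
    linear_combination (norm := module) e3 - f3
  have f5 : (a + b) - c = 0 :=
    (smul_eq_zero.mp f4).resolve_left Complex.I_ne_zero
  refine ⟨by rw [mul_assoc]; exact hC, ?_, ?_, ?_⟩
  · rw [mul_assoc, mul_assoc]
    linear_combination (norm := module) (1/2:ℂ) • f1 + (1/2:ℂ) • f5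
  · rw [mul_assoc]
    linear_combination (norm := module) (1/2:ℂ) • f1 - (1/2:ℂ) • f5
  · rw [mul_assoc, mul_assoc]
    linear_combination (norm := module) hD
end

section
/- Let W be a partial isometry on a complex Hilbert space with the property that the only partial isometry V satisfying V* W = 0 and V W* = 0 is V = 0. Then W is an isometry or a coisometry (i.e., W* W = I or W W* = I). -/
/-!
If neither `W* W = 1` nor `W W* = 1`, the generalised-inverse identities `W W* W = W` and
`W* W W* = W*` give unit vectors `x ∈ ker W` and `y ∈ ker W*`. The rank-one operator
`z ↦ ⟪x, z⟫ y` is then a nonzero partial isometry orthogonal to `W`, contradicting maximality.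
-/

open ContinuousLinearMap InnerProductSpace

theorem exists_ne_zero_apply_eq_zero_of_comp_comp_eq {R M N : Type*} [Semiring R]
    [AddCommGroup M] [Module R M] [TopologicalSpace M] [AddCommGroup N] [Module R N]
    [TopologicalSpace N] {A : M →L[R] N} {B : N →L[R] M} (h : A ∘L B ∘L A = A)
    (hne : B ∘L A ≠ .id R M) : ∃ x ≠ 0, A x = 0 := by
  obtain ⟨x, hx⟩ : ∃ x, B (A x) ≠ x := by
    by_contra! hall
    exact hne (ext hall)
  refine ⟨x - B (A x), sub_ne_zero.mpr hx.symm, ?_⟩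
  rw [map_sub, sub_eq_zero]
  exact (congrArg (· x) h).symm

section RankOne

variable {𝕜 E F G : Type*} [RCLike 𝕜] [NormedAddCommGroup E] [InnerProductSpace 𝕜 E]
  [CompleteSpace E] [NormedAddCommGroup F] [InnerProductSpace 𝕜 F] [NormedAddCommGroup G]
  [InnerProductSpace 𝕜 G] [CompleteSpace G]

theorem rankOne_comp_adjoint_comp_rankOne_of_norm_eq_one [CompleteSpace F] {x : E} {y : F}
    (hx : ‖x‖ = 1) (hy : ‖y‖ = 1) :
    rankOne 𝕜 y x ∘L adjoint (rankOne 𝕜 y x) ∘L rankOne 𝕜 y x = rankOne 𝕜 y x := by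
  simp [rankOne_comp_rankOne, hx, hy]

theorem adjoint_rankOne_comp_eq_zero [CompleteSpace F] {T : G →L[𝕜] F} (x : E) {y : F}
    (hy : adjoint T y = 0) :
    adjoint (rankOne 𝕜 y x) ∘L T = 0 := by
  simp [rankOne_comp, hy]

theorem rankOne_comp_adjoint_eq_zero {T : E →L[𝕜] G} {x : E} (y : F) (hx : T x = 0) :
    rankOne 𝕜 y x ∘L adjoint T = 0 := by
  simp [rankOne_comp, hx]

end RankOne

theorem stmt_12 {H : Type*} [NormedAddCommGroup H] [InnerProductSpace ℂ H]
    [CompleteSpace H] (W : H →L[ℂ] H) (hW : W * adjoint W * W = W)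
    (hmax : ∀ V : H →L[ℂ] H, V * adjoint V * V = V →
        adjoint V * W = 0 → V * adjoint W = 0 → V = 0) :
    adjoint W * W = 1 ∨ W * adjoint W = 1 := by
  by_contra! ⟨hWW, hWW'⟩
  have hW' : adjoint W * W * adjoint W = adjoint W := by
    simpa [← star_eq_adjoint, mul_assoc] using congrArg star hW
  obtain ⟨x, hx0, hx⟩ :=
    exists_ne_zero_apply_eq_zero_of_comp_comp_eq ((mul_assoc W _ _).symm.trans hW) hWW
  obtain ⟨y, hy0, hy⟩ :=
    exists_ne_zero_apply_eq_zero_of_comp_comp_eq ((mul_assoc (adjoint W) _ _).symm.trans hW') hWW'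
  set x₁ := (‖x‖⁻¹ : ℂ) • x
  set y₁ := (‖y‖⁻¹ : ℂ) • y
  have hx₁ : ‖x₁‖ = 1 := by simp [x₁, norm_smul, hx0]
  have hy₁ : ‖y₁‖ = 1 := by simp [y₁, norm_smul, hy0]
  have hV : rankOne ℂ y₁ x₁ = 0 := by
    refine hmax _ ?_ (adjoint_rankOne_comp_eq_zero x₁ (by simp [y₁, hy]))
      (rankOne_comp_adjoint_eq_zero y₁ (by simp [x₁, hx]))
    rw [mul_assoc]
    exact rankOne_comp_adjoint_comp_rankOne_of_norm_eq_one hx₁ hy₁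
  exact rankOne_ne_zero (by simp [y₁, hy0]) (by simp [x₁, hx0]) hV
end

section
/- Let A, B be linear bijections of a complex Hilbert space H such that |⟨x, y⟩| = |⟨Ax, By⟩| for all x, y ∈ H. Then A and B are bounded. -/
open scoped InnerProductSpace

open Filter Topology

private lemma aux_cont {H : Type*} [NormedAddCommGroup H] [InnerProductSpace ℂ H]
    [CompleteSpace H] (A B : H →ₗ[ℂ] H)
    (hB : Function.Surjective B)
    (h : ∀ x y : H, ‖⟪x, y⟫_ℂ‖ = ‖⟪A x, B y⟫_ℂ‖) :
    Continuous A := by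
  apply LinearMap.continuous_of_seq_closed_graph
  intro u x y hu hAu
  have key : ∀ w : H, ⟪y - A x, B w⟫_ℂ = 0 := by
    intro w
    have h1 : Tendsto (fun n => ⟪A (u n) - A x, B w⟫_ℂ) atTop (𝓝 ⟪y - A x, B w⟫_ℂ) :=
      Tendsto.inner (hAu.sub tendsto_const_nhds) tendsto_const_nhds
    have h2 : Tendsto (fun n => ‖⟪u n - x, w⟫_ℂ‖) atTop (𝓝 0) := by
      have h3 : Tendsto (fun n => ⟪u n - x, w⟫_ℂ) atTop (𝓝 ⟪x - x, w⟫_ℂ) :=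
        Tendsto.inner (hu.sub tendsto_const_nhds) tendsto_const_nhds
      simpa using h3.norm
    have heq : (fun n => ‖⟪u n - x, w⟫_ℂ‖) = fun n => ‖⟪A (u n) - A x, B w⟫_ℂ‖ := by
      funext n
      rw [h (u n - x) w, map_sub]
    rw [heq] at h2
    have := tendsto_nhds_unique h1.norm h2
    exact norm_eq_zero.mp this
  have : ∀ v : H, ⟪y - A x, v⟫_ℂ = 0 := by
    intro v
    obtain ⟨w, rfl⟩ := hB v
    exact key w
  have := this (y - A x)
  rw [inner_self_eq_zero, sub_eq_zero] at this
  exact this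

theorem stmt_18 {H : Type*} [NormedAddCommGroup H] [InnerProductSpace ℂ H]
    [CompleteSpace H] (A B : H →ₗ[ℂ] H)
    (hA : Function.Bijective A) (hB : Function.Bijective B)
    (h : ∀ x y : H, ‖⟪x, y⟫_ℂ‖ = ‖⟪A x, B y⟫_ℂ‖) :
    Continuous A ∧ Continuous B := by
  refine ⟨aux_cont A B hB.surjective h, aux_cont B A hA.surjective ?_⟩
  intro x y
  rw [← norm_inner_symm, h y x, ← norm_inner_symm]
end
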